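/- Consider the geometric-type double sum used in the pruning analysis: for any n ≥ 2 and any s with 1 ≤ s ≤ n, Σ_{j ≥ 0, 2^{2^j} ≤ n} min{s, n/2^{2^{j-1}}}·2^{j+1} ≤ C·s·(log₂(n/s)+1) for an absolute constant C. -/

import Mathlib

/-!
Write `n = s · 2^m` with `m = log₂(n/s) ≥ 0` and `t_j = 2^{j-1}`. The `j`-th term is
`4 s · t_j · min(1, 2^{m - t_j})`, and `t² · 2^{m-t}` stays `O((m+1)²)`, so the term is
`O(s · min(t_j, (m+1)²/t_j))`. Along the doubling sequence `t_j` these minima grow geometrically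
up to `m+1` and then decay geometrically, so their sum is `O(m+1)`.
-/

open Classical

open Real Finset

lemma sq_le_eight_mul_two_rpow {u : ℝ} (hu : 0 ≤ u) : u ^ 2 ≤ 8 * (2 : ℝ) ^ u := by
  have hlog : 1 / 2 ≤ log 2 := by linarith [log_two_gt_d9]
  have hexp := quadratic_le_exp_of_nonneg (mul_nonneg (log_nonneg one_le_two) hu)
  rw [rpow_def_of_pos two_pos, mul_comm]
  nlinarith [mul_le_mul_of_nonneg_left hlog hu, sq_nonneg (log 2 * u)]

lemma sq_mul_min_one_two_rpow_sub_le {m t : ℝ} (hm : 0 ≤ m) (ht : 0 ≤ t) :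
    t ^ 2 * min 1 ((2 : ℝ) ^ (m - t)) ≤ 16 * (m + 1) ^ 2 := by
  rcases le_total t m with htm | hmt
  · nlinarith [min_le_left 1 ((2 : ℝ) ^ (m - t)), sq_nonneg t]
  · have hu : 0 ≤ t - m := sub_nonneg.mpr hmt
    have hpos : 0 < (2 : ℝ) ^ (t - m) := rpow_pos_of_pos two_pos _
    have hone : 1 ≤ (2 : ℝ) ^ (t - m) := one_le_rpow one_le_two hu
    have hsq := sq_le_eight_mul_two_rpow hu
    calc t ^ 2 * min 1 ((2 : ℝ) ^ (m - t)) ≤ t ^ 2 / (2 : ℝ) ^ (t - m) := by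
          rw [div_eq_mul_inv, ← rpow_neg two_pos.le, neg_sub]
          exact mul_le_mul_of_nonneg_left (min_le_right _ _) (sq_nonneg t)
      _ ≤ 16 * (m + 1) ^ 2 := by
          rw [div_le_iff₀ hpos]
          nlinarith [sq_nonneg (t - 2 * m), mul_nonneg (sq_nonneg m) (sub_nonneg.mpr hone)]

lemma mul_min_one_two_rpow_sub_le {m t : ℝ} (hm : 0 ≤ m) (ht : 0 < t) :
    t * min 1 ((2 : ℝ) ^ (m - t)) ≤ 16 * min t ((m + 1) ^ 2 / t) := by
  have hmin : min 1 ((2 : ℝ) ^ (m - t)) ≤ 1 := min_le_left _ _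
  have hmin0 : 0 ≤ min 1 ((2 : ℝ) ^ (m - t)) := le_min zero_le_one (rpow_nonneg zero_le_two _)
  rw [mul_min_of_nonneg _ _ (by norm_num : (0 : ℝ) ≤ 16)]
  refine le_min (by nlinarith) ?_
  rw [mul_div_assoc', le_div_iff₀ ht]
  nlinarith [sq_mul_min_one_two_rpow_sub_le hm ht.le]

/-- A telescoping potential for `min(t, M²/t)` along doubling sequences `t, 2t, 4t, …`. -/
noncomputable def doublingPotential (M t : ℝ) : ℝ :=
  if t ≤ M then 2 * t else 4 * M - 2 * (M ^ 2 / t)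

lemma doublingPotential_nonneg {M t : ℝ} (hM : 0 ≤ M) (ht : 0 ≤ t) :
    0 ≤ doublingPotential M t := by
  unfold doublingPotential
  split_ifs with htM
  · linarith
  · have hMt : M ^ 2 / t ≤ M := by
      rw [div_le_iff₀ (by linarith)]; nlinarith
    linarith

lemma doublingPotential_le {M t : ℝ} (hM : 0 ≤ M) : doublingPotential M t ≤ 4 * M := by
  unfold doublingPotential
  split_ifs with htM
  · linarith
  · have : 0 ≤ M ^ 2 / t := div_nonneg (sq_nonneg M) (by linarith)
    linarith

lemma min_le_doublingPotential_sub {M t : ℝ} (hM : 0 < M) (ht : 0 < t) :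
    min t (M ^ 2 / t) ≤ doublingPotential M (2 * t) - doublingPotential M t := by
  have halve : 2 * (M ^ 2 / (2 * t)) = M ^ 2 / t := by field_simp
  unfold doublingPotential
  split_ifs with h2t htM htM
  · linarith [min_le_left t (M ^ 2 / t)]
  · linarith
  · -- `t ≤ M < 2t`: the increment `4M - M²/t - 2t` exceeds `t` because `(3t - M)(M - t) ≥ 0`
    refine (min_le_left _ _).trans ?_
    have : M ^ 2 / t ≤ 4 * M - 3 * t := by
      rw [div_le_iff₀ ht]; nlinarith
    linarith
  · linarith [min_le_right t (M ^ 2 / t)]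

theorem sum_range_min_doubling_le {M a : ℝ} (hM : 0 < M) (ha : 0 < a) (N : ℕ) :
    ∑ j ∈ range N, min (a * 2 ^ j) (M ^ 2 / (a * 2 ^ j)) ≤ 4 * M := by
  calc ∑ j ∈ range N, min (a * 2 ^ j) (M ^ 2 / (a * 2 ^ j))
      ≤ ∑ j ∈ range N, (doublingPotential M (a * 2 ^ (j + 1)) - doublingPotential M (a * 2 ^ j)) :=
        sum_le_sum fun j _ => by
          rw [show a * 2 ^ (j + 1) = 2 * (a * 2 ^ j) by ring]
          exact min_le_doublingPotential_sub hM (by positivity)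
    _ = doublingPotential M (a * 2 ^ N) - doublingPotential M (a * 2 ^ 0) :=
        sum_range_sub (fun j => doublingPotential M (a * 2 ^ j)) N
    _ ≤ 4 * M := by
        linarith [doublingPotential_le (t := a * 2 ^ N) hM.le,
          doublingPotential_nonneg (t := a * 2 ^ 0) hM.le (by positivity)]

lemma two_rpow_natCast_sub_one (j : ℕ) : (2 : ℝ) ^ ((j : ℝ) - 1) = 2⁻¹ * 2 ^ j := by
  rw [rpow_sub two_pos, rpow_natCast, rpow_one, inv_mul_eq_div]

lemma min_mul_two_pow_succ_le {n s m : ℝ} (hs : 0 < s) (hm : 0 ≤ m) (hn : n = s * 2 ^ m) (j : ℕ) :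
    min s (n / (2 : ℝ) ^ ((2 : ℝ) ^ ((j : ℝ) - 1))) * (2 : ℝ) ^ (j + 1)
      ≤ 64 * s * min (2⁻¹ * 2 ^ j) ((m + 1) ^ 2 / (2⁻¹ * 2 ^ j)) := by
  set t : ℝ := (2 : ℝ) ^ ((j : ℝ) - 1) with ht_def
  have ht : 0 < t := rpow_pos_of_pos two_pos _
  have hpow : (2 : ℝ) ^ (j + 1) = 4 * t := by
    rw [ht_def, two_rpow_natCast_sub_one, pow_succ]; ring
  have hmin : min s (n / (2 : ℝ) ^ t) = s * min 1 ((2 : ℝ) ^ (m - t)) := by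
    rw [mul_min_of_nonneg _ _ hs.le, hn, rpow_sub two_pos, mul_one, mul_div_assoc]
  rw [hmin, hpow, ← two_rpow_natCast_sub_one, ← ht_def]
  nlinarith [mul_min_one_two_rpow_sub_le hm ht]

theorem stmt16 : ∃ C : ℝ, 0 < C ∧
    ∀ (n : ℕ) (s : ℝ), 2 ≤ n → 1 ≤ s → s ≤ (n : ℝ) →
      (∑ j ∈ (Finset.range n).filter (fun j => 2 ^ 2 ^ j ≤ n),
          min s ((n : ℝ) / (2 : ℝ) ^ ((2 : ℝ) ^ ((j : ℝ) - 1))) * (2 : ℝ) ^ (j + 1))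
        ≤ C * s * (Real.logb 2 ((n : ℝ) / s) + 1) := by
  refine ⟨256, by norm_num, fun n s _ hs hsn => ?_⟩
  have hs0 : 0 < s := by linarith
  set m := logb 2 ((n : ℝ) / s)
  have hm : 0 ≤ m := logb_nonneg one_lt_two ((one_le_div hs0).mpr hsn)
  have hn : (n : ℝ) = s * 2 ^ m := by
    rw [rpow_logb two_pos (by norm_num) (by positivity), mul_div_cancel₀ _ hs0.ne']
  calc _ ≤ ∑ j ∈ range n,
        min s ((n : ℝ) / (2 : ℝ) ^ ((2 : ℝ) ^ ((j : ℝ) - 1))) * (2 : ℝ) ^ (j + 1) :=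
        sum_le_sum_of_subset_of_nonneg (filter_subset _ _) fun j _ _ => by positivity
    _ ≤ ∑ j ∈ range n, 64 * s * min (2⁻¹ * 2 ^ j) ((m + 1) ^ 2 / (2⁻¹ * 2 ^ j)) :=
        sum_le_sum fun j _ => min_mul_two_pow_succ_le hs0 hm hn j
    _ ≤ 64 * s * (4 * (m + 1)) := by
        rw [← mul_sum]
        gcongr
        exact sum_range_min_doubling_le (by linarith) (by norm_num) n
    _ = 256 * s * (m + 1) := by ring
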